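/- Let p be an even integer and z, w nonzero complex numbers with z^{p/2}·z + 1 ≠ 0. If z and w satisfy the system z^{p/2}(1 - zw) = w - z and (1 - zw)(w - z) = zw, then w = (z + z^{p/2})/(z^{p/2}·z + 1) and z satisfies z² - ((z + z^{p/2})/(z^{p/2}z + 1) + 1 + (z^{p/2}z + 1)/(z + z^{p/2}))·z + 1 = 0 (assuming also z + z^{p/2} ≠ 0). -/

import Mathlib

/-!
The first saddle point equation is linear in `w`, which gives `w`. Dividing the second one by
`w` turns it into `z² - (w + 1 + w⁻¹) z + 1 = 0`, and `w⁻¹` is the flipped fraction.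
-/

section SaddlePoint

variable {K : Type*} [Field K]

theorem eq_div_of_mul_one_sub_mul_eq_sub {a z w : K} (ha : a * z + 1 ≠ 0)
    (h : a * (1 - z * w) = w - z) : w = (z + a) / (a * z + 1) := by
  rw [eq_div_iff ha]
  linear_combination -h

theorem sq_sub_add_one_add_inv_mul_add_one_eq_zero {z w : K} (hw : w ≠ 0)
    (h : (1 - z * w) * (w - z) = z * w) : z ^ 2 - (w + 1 + w⁻¹) * z + 1 = 0 := by
  field_simp
  linear_combination h

end SaddlePoint

theorem saddle_point_reduction_general (r : ℤ) (z w : ℂ) (hw : w ≠ 0)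
    (hden₁ : z ^ r * z + 1 ≠ 0)
    (heq₁ : z ^ r * (1 - z * w) = w - z)
    (heq₂ : (1 - z * w) * (w - z) = z * w) :
    w = (z + z ^ r) / (z ^ r * z + 1) ∧
      z ^ 2 - ((z + z ^ r) / (z ^ r * z + 1) + 1 + (z ^ r * z + 1) / (z + z ^ r)) * z + 1 = 0 := by
  have hw' := eq_div_of_mul_one_sub_mul_eq_sub hden₁ heq₁
  have hquad := sq_sub_add_one_add_inv_mul_add_one_eq_zero hw heq₂
  rw [hw', inv_div] at hquad
  exact ⟨hw', hquad⟩

theorem saddle_point_reduction (r : ℤ) (z w : ℂ) (hz : z ≠ 0) (hw : w ≠ 0)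
    (hden₁ : z ^ r * z + 1 ≠ 0) (hden₂ : z + z ^ r ≠ 0)
    (heq₁ : z ^ r * (1 - z * w) = w - z)
    (heq₂ : (1 - z * w) * (w - z) = z * w) :
    w = (z + z ^ r) / (z ^ r * z + 1) ∧
      z ^ 2 - ((z + z ^ r) / (z ^ r * z + 1) + 1 + (z ^ r * z + 1) / (z + z ^ r)) * z + 1 = 0 :=
  saddle_point_reduction_general r z w hw hden₁ heq₁ heq₂
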